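/- arXiv:1312.7403 — 14 statements merged into one kernel-verified Lean document; each statement's English description precedes it below -/
import Mathlib

section
/- Every factorization of a non-unit element a = λa₁⋯aₙ (with λ a unit and each aᵢ a nonzero nonunit) in a commutative ring with 1 can be rearranged into a U-factorization, i.e., the factors can be reordered so that a = λa_{s₁}⋯a_{sₖ}⌈a_{s_{k+1}}⋯a_{sₙ}⌉ where each a_{sᵢ} with i ≤ k satisfies a_{sᵢ}·(a_{s_{k+1}}⋯a_{sₙ}) generates the same principal ideal as (a_{s_{k+1}}⋯a_{sₙ}), and removing any factor a_{sⱼ} with j > k strictly enlarges the principal ideal generated by the remaining essential factors. -/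
/-- `x` is a nonzero nonunit, i.e. an element of `R^#`. -/
def NNU {R : Type*} [CommRing R] (x : R) : Prop := x ≠ 0 ∧ ¬ IsUnit x

/-- `R` is présimplifiable: `x = x*y` implies `x = 0` or `y` is a unit. -/
def Presimplifiable (R : Type*) [CommRing R] : Prop :=
  ∀ x y : R, x = x * y → x = 0 ∨ IsUnit y

/-- `R` is a strongly associate ring: `(a) = (b)` implies `a = u*b` for some unit `u`. -/
def StronglyAssociateRing (R : Type*) [CommRing R] : Prop :=
  ∀ a b : R, Ideal.span ({a} : Set R) = Ideal.span {b} → ∃ u : R, IsUnit u ∧ a = u * b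

variable {R : Type*} [CommRing R]

/-- `a = u * ines.prod * ess.prod` is a U-factorization: the members of `ines`
(the inessential divisors) and `ess` (the essential divisors) are nonzero nonunits,
each inessential divisor `x` satisfies `(x * ess.prod) = (ess.prod)`, and omitting
any essential divisor changes the ideal generated by the product of the essential
divisors. -/
def IsUFact (a u : R) (ines ess : List R) : Prop :=
  IsUnit u ∧ (∀ x ∈ ines, NNU x) ∧ (∀ x ∈ ess, NNU x) ∧
    a = u * ines.prod * ess.prod ∧
    (∀ x ∈ ines, Ideal.span ({x * ess.prod} : Set R) = Ideal.span ({ess.prod} : Set R)) ∧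
    (∀ j < ess.length,
      Ideal.span ({ess.prod} : Set R) ≠ Ideal.span ({(ess.eraseIdx j).prod} : Set R))

/-- `a = u * l.prod` is a τ-factorization: `u` is a unit, the factors are nonzero
nonunits, and distinct factors are τ-related. -/
def IsTauFact (τ : R → R → Prop) (a u : R) (l : List R) : Prop :=
  IsUnit u ∧ (∀ x ∈ l, NNU x) ∧ a = u * l.prod ∧ l.Pairwise τ

/-- A τ-U-factorization: a U-factorization whose underlying factorization is a
τ-factorization. -/
def IsTauUFact (τ : R → R → Prop) (a u : R) (ines ess : List R) : Prop :=
  IsUFact a u ines ess ∧ (ines ++ ess).Pairwise τ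

/-- `a` is τ-irreducible: `a` is a nonunit and every τ-factorization of `a`
contains a factor generating the same principal ideal as `a`. -/
def TauIrred (τ : R → R → Prop) (a : R) : Prop :=
  ¬ IsUnit a ∧ ∀ u l, IsTauFact τ a u l →
    ∃ b ∈ l, Ideal.span ({a} : Set R) = Ideal.span ({b} : Set R)

/-- `b` τ-divides `a`: `b` occurs as a factor in some τ-factorization of `a`. -/
def TauDivides (τ : R → R → Prop) (b a : R) : Prop :=
  ∃ u l, IsTauFact τ a u l ∧ b ∈ l

/-- `b` is an essential divisor in some τ-U-factorization of `a`. -/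
def IsEssTauUDivisor (τ : R → R → Prop) (b a : R) : Prop :=
  ∃ u ines ess, IsTauUFact τ a u ines ess ∧ b ∈ ess

/-- `R` is a τ-BFR: every nonunit has a bound on the number of factors in any
τ-factorization. -/
def TauBFR (τ : R → R → Prop) : Prop :=
  ∀ a : R, ¬ IsUnit a → ∃ N : ℕ, ∀ u l, IsTauFact τ a u l → l.length ≤ N

/-- `R` is a τ-U-BFR: every nonunit has a bound on the number of essential
divisors in any τ-U-factorization. -/
def TauUBFR (τ : R → R → Prop) : Prop :=
  ∀ a : R, ¬ IsUnit a → ∃ N : ℕ, ∀ u ines ess, IsTauUFact τ a u ines ess → ess.length ≤ N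

/-- `R` is τ-présimplifiable: the only τ-factorizations of `x` containing `x`
as a factor are the trivial ones `x = λ * x`. -/
def TauPresimplifiable (τ : R → R → Prop) : Prop :=
  ∀ (x u : R) (l : List R), IsTauFact τ x u l → x ∈ l → l = [x]

/-- `R` is τ-U-présimplifiable: every τ-U-factorization of every nonzero
nonunit has no nonunit inessential divisors. -/
def TauUPresimplifiable (τ : R → R → Prop) : Prop :=
  ∀ a : R, a ≠ 0 → ¬ IsUnit a →
    ∀ u ines ess, IsTauUFact τ a u ines ess → ∀ x ∈ ines, IsUnit x

/-- τ is refinable: replacing a factor of a τ-factorization by one of its own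
τ-factorizations again yields a τ-factorization. -/
def TauRefinable (τ : R → R → Prop) : Prop :=
  ∀ (a u b u' : R) (l₁ l₂ m : List R),
    IsTauFact τ a u (l₁ ++ b :: l₂) → IsTauFact τ b u' m →
      IsTauFact τ a (u * u') (l₁ ++ m ++ l₂)

/-- `R` is τ-U-refinable: refining an essential divisor of a τ-U-factorization by
one of its own τ-U-factorizations again yields a τ-U-factorization. -/
def TauURefinable (τ : R → R → Prop) : Prop :=
  ∀ (a u b u' : R) (ines ines' ess' e₁ e₂ : List R),
    IsTauUFact τ a u ines (e₁ ++ b :: e₂) → IsTauUFact τ b u' ines' ess' →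
      IsTauUFact τ a (u * u') (ines ++ ines') (e₁ ++ ess' ++ e₂)

/-- `R` satisfies τ-ACCP. -/
def TauACCP (τ : R → R → Prop) : Prop :=
  ¬ ∃ c : ℕ → R, (∀ i, Ideal.span ({c i} : Set R) < Ideal.span ({c (i + 1)} : Set R)) ∧
      ∀ i, TauDivides τ (c (i + 1)) (c i)

/-- `R` satisfies τ-U-ACCP. -/
def TauUACCP (τ : R → R → Prop) : Prop :=
  ¬ ∃ c : ℕ → R, (∀ i, Ideal.span ({c i} : Set R) < Ideal.span ({c (i + 1)} : Set R)) ∧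
      ∀ i, IsEssTauUDivisor τ (c (i + 1)) (c i)

/-- `a ≅ b`: very strong associates. -/
def VSAssoc (a b : R) : Prop :=
  Ideal.span ({a} : Set R) = Ideal.span ({b} : Set R) ∧
    ((a = 0 ∧ b = 0) ∨ ∀ r : R, a = r * b → IsUnit r)

/-- `a` is τ-very strongly atomic: `a ≅ a`, `a` is a nonunit, and every
τ-factorization of `a` is trivial. -/
def TauVSAtomic (τ : R → R → Prop) (a : R) : Prop :=
  ¬ IsUnit a ∧ VSAssoc a a ∧ ∀ u l, IsTauFact τ a u l → l.length = 1

/-- Two lists agree up to rearrangement and associates. -/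
def AssocPerm (l l' : List R) : Prop :=
  ∃ l'' : List R, l'.Perm l'' ∧
    List.Forall₂ (fun x y => Ideal.span ({x} : Set R) = Ideal.span ({y} : Set R)) l l''

/-- The product relation `τ_×` on a product of rings: coordinates are related
whenever both are nonunits. -/
def TauX {ι : Type*} {S : ι → Type*} [∀ i, CommRing (S i)]
    (τ : ∀ i, S i → S i → Prop) (a b : ∀ i, S i) : Prop :=
  ∀ i, ¬ IsUnit (a i) → ¬ IsUnit (b i) → τ i (a i) (b i)


open Ideal in
private lemma perm_getElem_cons_eraseIdx {R : Type*} (l : List R) {j : ℕ} (hj : j < l.length) :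
    l.Perm (l[j] :: l.eraseIdx j) := by
  classical
  exact (List.perm_cons_erase (l.getElem_mem hj)).trans
    (List.Perm.cons _ (List.erase_getElem hj))

open Ideal in
private lemma key_lemma {R : Type*} [CommRing R] :
    ∀ (n : ℕ) (ess ines : List R), ess.length = n →
    (∀ x ∈ ines, Ideal.span ({x * ess.prod} : Set R) = Ideal.span ({ess.prod} : Set R)) →
    ∃ ines' ess' : List R, (ines' ++ ess').Perm (ines ++ ess) ∧
      (∀ x ∈ ines', Ideal.span ({x * ess'.prod} : Set R) = Ideal.span ({ess'.prod} : Set R)) ∧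
      (∀ j < ess'.length,
        Ideal.span ({ess'.prod} : Set R) ≠ Ideal.span ({(ess'.eraseIdx j).prod} : Set R)) := by
  intro n
  induction n with
  | zero =>
    intro ess ines hlen hines
    exact ⟨ines, ess, List.Perm.refl _, hines, by
      intro j hj; rw [hlen] at hj; omega⟩
  | succ n IH =>
    intro ess ines hlen hines
    by_cases h : ∀ j < ess.length,
        Ideal.span ({ess.prod} : Set R) ≠ Ideal.span ({(ess.eraseIdx j).prod} : Set R)
    · exact ⟨ines, ess, List.Perm.refl _, hines, h⟩
    · push_neg at h
      obtain ⟨j, hj, hspan⟩ := h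
      set b := ess[j] with hb
      set ess' := ess.eraseIdx j with hess'
      have hperm : ess.Perm (b :: ess') := perm_getElem_cons_eraseIdx ess hj
      have hprod : ess.prod = b * ess'.prod := by
        simpa using hperm.prod_eq
      have hlen' : ess'.length = n := by
        rw [hess', List.length_eraseIdx_of_lt hj]; omega
      -- condition for new inessential list b :: ines
      have hcond : ∀ x ∈ b :: ines,
          Ideal.span ({x * ess'.prod} : Set R) = Ideal.span ({ess'.prod} : Set R) := by
        intro x hx
        rcases List.mem_cons.mp hx with rfl | hx
        · rw [← hprod]; exact hspan
        · have h1 := hines x hx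
          apply le_antisymm
          · rw [Ideal.span_singleton_le_span_singleton]
            exact Dvd.intro _ (mul_comm _ _)
          · rw [Ideal.span_singleton_le_span_singleton]
            -- need x * ess'.prod ∣ ess'.prod
            have h2 : x * ess.prod ∣ ess.prod := by
              rw [← Ideal.span_singleton_le_span_singleton]
              exact h1.ge
            have h3 : ess.prod ∣ ess'.prod := by
              rw [← Ideal.span_singleton_le_span_singleton]
              exact hspan.ge
            calc x * ess'.prod ∣ x * ess.prod := by
                  rw [hprod]; exact ⟨b, by ring⟩
              _ ∣ ess.prod := h2
              _ ∣ ess'.prod := h3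
      obtain ⟨ines', ess'', hperm', hc1, hc2⟩ := IH ess' (b :: ines) hlen' hcond
      refine ⟨ines', ess'', hperm'.trans ?_, hc1, hc2⟩
      show List.Perm (b :: (ines ++ ess')) (ines ++ ess)
      exact List.perm_middle.symm.trans ((hperm.append_left ines).symm)

/-- Every factorization of a nonunit into a unit times nonzero nonunits can be
rearranged into a U-factorization. -/
theorem stmt0 {R : Type*} [CommRing R] (a u : R) (l : List R)
    (ha : ¬ IsUnit a) (hu : IsUnit u) (hl : ∀ x ∈ l, NNU x) (heq : a = u * l.prod) :
    ∃ ines ess : List R, (ines ++ ess).Perm l ∧ IsUFact a u ines ess := by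
  
  obtain ⟨ines, ess, hperm, hc1, hc2⟩ :=
    key_lemma l.length l ([] : List R) rfl (by simp)
  rw [List.nil_append] at hperm
  refine ⟨ines, ess, hperm, hu, ?_, ?_, ?_, hc1, hc2⟩
  · intro x hx; exact hl x (hperm.mem_iff.mp (List.mem_append_left _ hx))
  · intro x hx; exact hl x (hperm.mem_iff.mp (List.mem_append_right _ hx))
  · rw [heq, mul_assoc, ← List.prod_append, hperm.prod_eq]
end

section
/- If a = λa₁⋯aₙ⌈b₁⋯bₘ⌉ is a U-factorization of a non-unit a in a commutative ring R, then for every index 1 ≤ i₀ ≤ m we have (a) = (b₁⋯bₘ) ⊊ (b₁⋯b̂_{i₀}⋯bₘ), i.e., the principal ideal generated by a equals the ideal generated by the product of all essential divisors, and this ideal is strictly contained in the ideal generated by the product omitting any one essential divisor. -/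
variable {R : Type*} [CommRing R]

/-- In a U-factorization, `(a)` equals the ideal generated by the product of the
essential divisors, and omitting any essential divisor strictly enlarges it. -/
theorem stmt1 {R : Type*} [CommRing R] (a u : R) (ines ess : List R)
    (ha : ¬ IsUnit a) (h : IsUFact a u ines ess) :
    Ideal.span ({a} : Set R) = Ideal.span ({ess.prod} : Set R) ∧
      ∀ j < ess.length,
        Ideal.span ({ess.prod} : Set R) < Ideal.span ({(ess.eraseIdx j).prod} : Set R) := by
  obtain ⟨hu, hines, hess, ha_eq, hspan, hne⟩ := h
  constructor
  · have h1 : ∀ l : List R,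
        (∀ x ∈ l, Ideal.span ({x * ess.prod} : Set R) = Ideal.span {ess.prod}) →
        Ideal.span ({l.prod * ess.prod} : Set R) = Ideal.span ({ess.prod} : Set R) := by
      intro l
      induction l with
      | nil => simp
      | cons x rest ih =>
        intro hl
        have hx := hl x (by simp)
        have hr := ih (fun y hy => hl y (by simp [hy]))
        apply le_antisymm
        · rw [Ideal.span_singleton_le_span_singleton]
          exact ⟨x * rest.prod, by rw [List.prod_cons]; ring⟩
        · rw [Ideal.span_singleton_le_span_singleton]
          have h2 : x * ess.prod ∣ ess.prod := by
            rw [← Ideal.span_singleton_le_span_singleton]; exact hx.ge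
          have h3 : rest.prod * ess.prod ∣ ess.prod := by
            rw [← Ideal.span_singleton_le_span_singleton]; exact hr.ge
          obtain ⟨r, hr2⟩ := h2
          obtain ⟨s, hs2⟩ := h3
          refine ⟨r * s, ?_⟩
          calc ess.prod = rest.prod * ess.prod * s := hs2
            _ = rest.prod * (x * ess.prod * r) * s := by rw [← hr2]
            _ = (x :: rest).prod * ess.prod * (r * s) := by rw [List.prod_cons]; ring
    rw [ha_eq, mul_assoc, Ideal.span_singleton_mul_left_unit hu]
    exact h1 ines hspan
  · intro j hj
    refine lt_of_le_of_ne ?_ (hne j hj)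
    rw [Ideal.span_singleton_le_span_singleton]
    exact (List.eraseIdx_sublist ess j).prod_dvd_prod
end

section
/- Let R be a commutative ring with 1 and τ a symmetric relation on R^#. A non-unit a ∈ R is τ-irreducible (i.e., every τ-factorization a = λa₁⋯aₙ has a ∼ aᵢ for some i, where ∼ means generating the same principal ideal) if and only if every τ-U-factorization of a has exactly one essential divisor. -/
variable {R : Type*} [CommRing R]

/-! An inessential divisor `x` of a U-factorization with essential part `B` satisfies
`(x B) = (B)`, so `(a) = (B)`. If `a` is τ-irreducible, some factor `b` of the τ-factorization
`a = λ · ines · ess` has `(b) = (a) = (B)`. When `b` is essential, irredundancy of `ess` forces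
`ess = [b]`; when `b` is inessential, `(B) = (bB) = (B²)`, so `(B)` is generated by an idempotent,
`a` is a unit multiple of `B`, and irreducibility applied to `a = λ' · ess` returns to the first
case. Conversely, moving redundant factors of a τ-factorization one at a time to the inessential
part produces a τ-U-factorization; its single essential divisor is associated to `a`. -/

open Ideal

theorem span_prod_mul_eq_of_forall {B : R} (L : List R)
    (h : ∀ x ∈ L, span {x * B} = span {B}) : span {L.prod * B} = span {B} := by
  induction L with
  | nil => rw [List.prod_nil, one_mul]
  | cons x t ih =>
    rw [List.forall_mem_cons] at h
    rw [List.prod_cons, mul_assoc, ← span_singleton_mul_span_singleton, ih h.2,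
      span_singleton_mul_span_singleton, h.1]

theorem associated_of_span_eq_of_mul_self_dvd {x y : R} (hxy : span {x} = span {y})
    (hy : y * y ∣ y) : Associated y x := by
  obtain ⟨r, hr⟩ : y ∣ x := span_singleton_le_span_singleton.mp hxy.le
  obtain ⟨s, hs⟩ : x ∣ y := span_singleton_le_span_singleton.mp hxy.ge
  obtain ⟨t, ht⟩ := hy
  -- `e` is an idempotent generator of `(y)`; `v = r e + (1 - e)` is the unit.
  set e := y * t
  have he : e * e = e := by linear_combination (-t) * ht
  have hye : y * e = y := by linear_combination -ht
  have hers : e * (r * s) = e := by linear_combination (-(t * s)) * hr - t * hs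
  have hvw : (r * e + (1 - e)) * (s * e + (1 - e)) = 1 := by
    linear_combination (r * s - r - s + 1) * he + hers
  exact ⟨Units.mkOfMulEqOne _ _ hvw, by
    simp only [Units.val_mkOfMulEqOne]; linear_combination (r - 1) * hye - hr⟩

theorem exists_isUFact_perm {a u : R} {ines ess : List R} (hu : IsUnit u)
    (hines : ∀ x ∈ ines, NNU x) (hess : ∀ x ∈ ess, NNU x) (ha : a = u * ines.prod * ess.prod)
    (hin : ∀ x ∈ ines, span {x * ess.prod} = span {ess.prod}) :
    ∃ ines' ess', (ines' ++ ess').Perm (ines ++ ess) ∧ IsUFact a u ines' ess' := by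
  by_cases hred : ∃ j, ∃ hj : j < ess.length, span {ess.prod} = span {(ess.eraseIdx j).prod}
  · obtain ⟨j, hj, hspan⟩ := hred
    have hprod : ess[j] * (ess.eraseIdx j).prod = ess.prod := List.CommMonoid.mul_prod_eraseIdx hj
    have hin' : ∀ x ∈ ines ++ [ess[j]],
        span {x * (ess.eraseIdx j).prod} = span {(ess.eraseIdx j).prod} := by
      rw [← hspan]
      intro x hx
      rcases List.mem_append.mp hx with hx | hx
      · rw [← span_singleton_mul_span_singleton, ← hspan, span_singleton_mul_span_singleton,
          hin x hx]
      · rw [List.mem_singleton.mp hx, hprod]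
    obtain ⟨ines', ess', hperm, hU⟩ := exists_isUFact_perm (a := a)
      (ines := ines ++ [ess[j]]) (ess := ess.eraseIdx j) hu
      (List.forall_mem_append.mpr ⟨hines, by simpa using hess _ (List.getElem_mem hj)⟩)
      (fun x hx => hess x (List.eraseIdx_subset hx))
      (by rw [ha, List.prod_append, List.prod_singleton, ← hprod]; ring) hin'
    refine ⟨ines', ess', hperm.trans ?_, hU⟩
    simpa using (List.getElem_cons_eraseIdx_perm hj).append_left ines
  · push Not at hred
    exact ⟨ines, ess, List.Perm.refl _, hu, hines, hess, ha, hin, hred⟩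
termination_by ess.length
decreasing_by rw [List.length_eraseIdx_of_lt hj]; omega

variable {a u : R} {ines ess : List R}

theorem IsUFact.span_eq (h : IsUFact a u ines ess) : span {a} = span {ess.prod} := by
  obtain ⟨hu, -, -, rfl, hines, -⟩ := h
  rw [mul_assoc, span_singleton_mul_left_unit hu, span_prod_mul_eq_of_forall ines hines]

theorem IsUFact.length_eq_one_of_mem {b : R} (h : IsUFact a u ines ess) (hb : b ∈ ess)
    (hab : span {a} = span {b}) : ess.length = 1 := by
  obtain ⟨i, hi, rfl⟩ := List.getElem_of_mem hb
  by_contra hlen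
  -- Omitting any index `j ≠ i` keeps `ess[i]`, which already generates `(ess.prod)`.
  set j := if i = 0 then 1 else 0
  have hj : j < ess.length := by grind
  have hmem : ess[i] ∈ ess.eraseIdx j := List.mem_eraseIdx_iff_getElem.mpr ⟨i, hi, by grind, rfl⟩
  refine h.2.2.2.2.2 j hj (le_antisymm ?_ ?_) <;> rw [span_singleton_le_span_singleton]
  · exact Dvd.intro_left _ (List.CommMonoid.mul_prod_eraseIdx hj)
  · exact (span_singleton_le_span_singleton.mp (h.span_eq.symm.trans hab).ge).trans
      (List.dvd_prod hmem)

theorem IsTauUFact.isTauFact {τ : R → R → Prop} (h : IsTauUFact τ a u ines ess) :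
    IsTauFact τ a u (ines ++ ess) := by
  obtain ⟨⟨hu, hines, hess, ha, -, -⟩, hτ⟩ := h
  exact ⟨hu, List.forall_mem_append.mpr ⟨hines, hess⟩,
    by rw [List.prod_append, ← mul_assoc, ha], hτ⟩

theorem stmt2_general {R : Type*} [CommRing R] (τ : R → R → Prop) (hsym : Symmetric τ)
    (a : R) :
    (∀ u l, IsTauFact τ a u l →
        ∃ b ∈ l, Ideal.span ({a} : Set R) = Ideal.span ({b} : Set R)) ↔
      (∀ u ines ess, IsTauUFact τ a u ines ess → ess.length = 1) := by
  constructor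
  · intro H u ines ess hU
    have ⟨⟨_, _, hess, _, hin, _⟩, hτ⟩ := hU
    have haB := hU.1.span_eq
    obtain ⟨b, hb, hab⟩ := H u _ hU.isTauFact
    obtain ⟨c, hc, hac⟩ : ∃ c ∈ ess, span {a} = span {c} := by
      rcases List.mem_append.mp hb with hb | hb
      · have hbB : span {b} = span {ess.prod} := hab.symm.trans haB
        have hBB : ess.prod * ess.prod ∣ ess.prod :=
          (mul_dvd_mul_right (span_singleton_le_span_singleton.mp hbB.le) _).trans
            (span_singleton_le_span_singleton.mp (hin b hb).ge)
        obtain ⟨v, hv⟩ := associated_of_span_eq_of_mul_self_dvd haB hBB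
        exact H v ess ⟨v.isUnit, hess, by rw [← hv, mul_comm], (List.pairwise_append.mp hτ).2.1⟩
      · exact ⟨b, hb, hab⟩
    exact hU.1.length_eq_one_of_mem hc hac
  · intro H u l ⟨hu, hl, ha, hτ⟩
    obtain ⟨ines, ess, hperm, hU⟩ := exists_isUFact_perm (a := a) (ines := []) hu (by simp) hl
      (by rwa [List.prod_nil, mul_one]) (by simp)
    have hτ' : (ines ++ ess).Pairwise τ := (hperm.pairwise_iff @hsym).mpr (by simpa using hτ)
    obtain ⟨c, rfl⟩ := List.length_eq_one_iff.mp (H u ines ess ⟨hU, hτ'⟩)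
    exact ⟨c, by simpa using hperm.subset (by simp), by simpa using hU.span_eq⟩

/-- A nonunit is τ-irreducible iff every τ-U-factorization of it has exactly one
essential divisor. -/
theorem stmt2 {R : Type*} [CommRing R] (τ : R → R → Prop) (hsym : Symmetric τ)
    (hsub : ∀ x y : R, τ x y → NNU x ∧ NNU y) (a : R) (ha : ¬ IsUnit a) :
    (∀ u l, IsTauFact τ a u l →
        ∃ b ∈ l, Ideal.span ({a} : Set R) = Ideal.span ({b} : Set R)) ↔
      (∀ u ines ess, IsTauUFact τ a u ines ess → ess.length = 1) :=
  stmt2_general τ hsym a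
end

section
/- If R is a présimplifiable commutative ring with 1 and τ is a symmetric relation on R^#, then R is τ-U-présimplifiable: every τ-U-factorization of a nonzero non-unit has no non-unit inessential divisors. -/
variable {R : Type*} [CommRing R]

/-- If `R` is présimplifiable, then `R` is τ-U-présimplifiable. -/
theorem stmt3 {R : Type*} [CommRing R] (τ : R → R → Prop) (hsym : Symmetric τ)
    (hsub : ∀ x y : R, τ x y → NNU x ∧ NNU y) (hp : Presimplifiable R) :
    TauUPresimplifiable τ := by
  intro a ha0 hau u ines ess hfac x hx
  obtain ⟨⟨hu, hines, hess, heq, hspan, _⟩, _⟩ := hfac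
  have hP : ess.prod ≠ 0 := by
    intro h
    apply ha0
    rw [heq, h, mul_zero]
  have hmem : ess.prod ∈ Ideal.span ({x * ess.prod} : Set R) := by
    rw [hspan x hx]
    exact Ideal.subset_span rfl
  obtain ⟨c, hc⟩ := Ideal.mem_span_singleton'.mp hmem
  have : ess.prod = ess.prod * (c * x) := by ring_nf; ring_nf at hc; linear_combination -hc
  rcases hp _ _ this with h | h
  · exact absurd h hP
  · exact isUnit_of_mul_isUnit_right h
end

section
/- If R is a τ-U-présimplifiable commutative ring with 1 and τ a symmetric relation on R^#, then R is τ-présimplifiable: for every x ∈ R, the only τ-factorizations of x containing x itself as a τ-factor are of the form x = λx with λ a unit. -/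
variable {R : Type*} [CommRing R]

/-- If `R` is τ-U-présimplifiable, then `R` is τ-présimplifiable. -/
theorem stmt4 {R : Type*} [CommRing R] (τ : R → R → Prop) (hsym : Symmetric τ)
    (hsub : ∀ x y : R, τ x y → NNU x ∧ NNU y) (h : TauUPresimplifiable τ) :
    TauPresimplifiable τ := by
  intro x u l hfact hmem
  obtain ⟨hu, hnnu, hprod, hpair⟩ := hfact
  obtain ⟨l₁, l₂, rfl⟩ := List.append_of_mem hmem
  have hx : NNU x := hnnu x hmem
  rcases List.eq_nil_or_concat (l₁ ++ l₂) with hnil | hne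
  · rcases List.append_eq_nil_iff.mp hnil with ⟨rfl, rfl⟩
    rfl
  · exfalso
    obtain ⟨y, hy⟩ : ∃ y, y ∈ l₁ ++ l₂ := by
      obtain ⟨t, a, ha⟩ := hne
      exact ⟨a, by simp [ha]⟩
    have hprod' : (l₁ ++ x :: l₂).prod = (l₁ ++ l₂).prod * x := by
      simp [List.prod_append]
      ring
    have hufact : IsTauUFact τ x u (l₁ ++ l₂) [x] := by
      refine ⟨⟨hu, ?_, ?_, ?_, ?_, ?_⟩, ?_⟩
      · intro z hz
        rcases List.mem_append.mp hz with hz | hz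
        · exact hnnu z (by simp [hz])
        · exact hnnu z (by simp [hz])
      · intro z hz
        simp at hz
        subst hz
        exact hx
      · simpa [hprod', mul_assoc] using hprod
      · intro z hz
        simp only [List.prod_cons, List.prod_nil, mul_one]
        apply le_antisymm
        · rw [Ideal.span_singleton_le_span_singleton]
          exact dvd_mul_left x z
        · rw [Ideal.span_singleton_le_span_singleton]
          obtain ⟨w, hw⟩ := List.dvd_prod hz
          refine ⟨u * w, ?_⟩
          calc x = u * (l₁ ++ l₂).prod * x := by
                  simpa [hprod', mul_assoc] using hprod
            _ = z * x * (u * w) := by rw [hw]; ring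
      · intro j hj
        have hj0 : j = 0 := by simpa using hj
        subst hj0
        simp only [List.eraseIdx, List.prod_cons, List.prod_nil]
        intro hc
        apply hx.2
        rw [← Ideal.span_singleton_eq_top]
        simpa [Ideal.span_singleton_one] using hc
      · have hperm : (l₁ ++ x :: l₂).Perm ((l₁ ++ l₂) ++ [x]) :=
          List.perm_middle.trans ((List.perm_append_singleton x (l₁ ++ l₂)).symm)
        exact (hperm.pairwise_iff @hsym).mp hpair
    exact (hnnu y (by
      rcases List.mem_append.mp hy with hz | hz
      · simp [hz]
      · simp [hz])).2 (h x hx.1 hx.2 u (l₁ ++ l₂) [x] hufact y hy)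
end

section
/- Let R be a commutative ring with 1 and τ a refinable symmetric relation on R^#. If R is a τ-BFR (every non-unit has a bound on the number of factors in any τ-factorization), then R is τ-présimplifiable, and moreover for every non-unit a₁ there is a fixed bound on the length of properly ascending chains of principal ideals (a₁) ⊊ (a₂) ⊊ ⋯ such that a_{i+1} τ-divides aᵢ at each stage. -/
variable {R : Type*} [CommRing R]

private lemma span_eq_of_unit_mul' {R : Type*} [CommRing R] {a u b : R} (hu : IsUnit u)
    (h : a = u * b) : Ideal.span ({a} : Set R) = Ideal.span {b} := by
  obtain ⟨v, rfl⟩ := hu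
  apply le_antisymm <;> rw [Ideal.span_singleton_le_span_singleton]
  · exact ⟨(v : R), by rw [h, mul_comm]⟩
  · exact ⟨((v⁻¹ : Rˣ) : R), by rw [h, mul_comm (v : R) b, mul_assoc]; simp⟩

private lemma refine_step' {R : Type*} [CommRing R] {τ : R → R → Prop}
    (href : TauRefinable τ) {a u b u' : R} {l m : List R}
    (hfa : IsTauFact τ a u l) (hb : b ∈ l) (hfb : IsTauFact τ b u' m) :
    ∃ w l', IsTauFact τ a w l' ∧ l'.length + 1 = l.length + m.length ∧ ∀ x ∈ m, x ∈ l' := by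
  obtain ⟨s, t, rfl⟩ := List.append_of_mem hb
  refine ⟨u * u', s ++ m ++ t, href a u b u' s t m hfa hfb, ?_, ?_⟩
  · simp [List.length_append]; ring
  · intro x hx; simp [hx]

/-- If τ is refinable and `R` is a τ-BFR, then `R` is τ-présimplifiable and every
nonunit admits a fixed bound on the length of properly ascending chains of
principal ideals along τ-divisibility. -/
theorem stmt6 {R : Type*} [CommRing R] (τ : R → R → Prop) (hsym : Symmetric τ)
    (hsub : ∀ x y : R, τ x y → NNU x ∧ NNU y) (href : TauRefinable τ)
    (hbfr : TauBFR τ) :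
    TauPresimplifiable τ ∧
      ∀ a₁ : R, ¬ IsUnit a₁ → ∃ N : ℕ, ∀ (k : ℕ) (c : ℕ → R), c 0 = a₁ →
        (∀ i < k, TauDivides τ (c (i + 1)) (c i) ∧
          Ideal.span ({c i} : Set R) < Ideal.span ({c (i + 1)} : Set R)) →
        k ≤ N:= by
  constructor
  · intro x u l hf hx
    by_contra hne
    have hlen : 2 ≤ l.length := by
      rcases l with _ | ⟨y, _ | ⟨z, t⟩⟩
      · simp at hx
      · simp at hx; exact absurd (by simp [hx]) hne
      · simp
    have hxnu : ¬ IsUnit x := (hf.2.1 x hx).2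
    obtain ⟨N, hN⟩ := hbfr x hxnu
    have claim : ∀ n : ℕ, ∃ w l', IsTauFact τ x w l' ∧ x ∈ l' ∧ l.length + n ≤ l'.length := by
      intro n
      induction n with
      | zero => exact ⟨u, l, hf, hx, by omega⟩
      | succ n ih =>
        obtain ⟨w, l', hf', hx', hlen'⟩ := ih
        obtain ⟨w₂, l₂, hf₂, hlen₂, hsub₂⟩ := refine_step' href hf' hx' hf
        exact ⟨w₂, l₂, hf₂, hsub₂ x hx, by omega⟩
    obtain ⟨w, l', hf', _, hlen'⟩ := claim (N + 1)
    have := hN w l' hf'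
    omega
  · intro a₁ ha₁
    obtain ⟨N, hN⟩ := hbfr a₁ ha₁
    refine ⟨N, ?_⟩
    intro k c hc0 hchain
    rcases Nat.eq_zero_or_pos k with rfl | hk
    · exact Nat.zero_le N
    have key : ∀ i < k, ∃ u m, IsTauFact τ (c i) u m ∧ c (i + 1) ∈ m ∧ 2 ≤ m.length := by
      intro i hi
      obtain ⟨⟨u, m, hf, hmem⟩, hlt⟩ := hchain i hi
      refine ⟨u, m, hf, hmem, ?_⟩
      by_contra h
      have : m = [c (i + 1)] := by
        rcases m with _ | ⟨y, _ | ⟨z, t⟩⟩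
        · simp at hmem
        · simp at hmem; simp [hmem]
        · simp at h
      rw [this] at hf
      have : Ideal.span ({c i} : Set R) = Ideal.span {c (i + 1)} :=
        span_eq_of_unit_mul' hf.1 (by simpa using hf.2.2.1)
      exact absurd this (ne_of_lt hlt)
    have claim : ∀ i : ℕ, 1 ≤ i → i ≤ k →
        ∃ w l, IsTauFact τ (c 0) w l ∧ c i ∈ l ∧ i + 1 ≤ l.length := by
      intro i
      induction i with
      | zero => omega
      | succ i ih =>
        intro _ hik
        rcases Nat.eq_zero_or_pos i with rfl | hi
        · obtain ⟨u, m, hf, hmem, hlen⟩ := key 0 hik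
          exact ⟨u, m, hf, hmem, by omega⟩
        · obtain ⟨w, l, hf, hmem, hlen⟩ := ih hi (by omega)
          obtain ⟨u, m, hf', hmem', hlen'⟩ := key i (by omega)
          obtain ⟨w₂, l₂, hf₂, hlen₂, hsub₂⟩ := refine_step' href hf hmem hf'
          exact ⟨w₂, l₂, hf₂, hsub₂ _ hmem', by omega⟩
    obtain ⟨w, l, hf, _, hlen⟩ := claim k hk le_rfl
    rw [hc0] at hf
    have := hN w l hf
    omega
end

section
/- Let R be a strongly associate commutative ring with 1 and τ a symmetric relation on R^#. If a = λa₁⋯aₙ⌈b₁⋯bₘ⌉ is a τ-U-factorization of a non-unit a in which every essential divisor bᵢ is τ-irreducible, then there exists a unit μ ∈ U(R) such that a = μb₁⋯bₘ is a τ-factorization into τ-irreducible factors. -/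
variable {R : Type*} [CommRing R]

theorem Ideal.span_singleton_prod_mul_eq_of_forall {S : Type*} [CommSemiring S] {p : S}
    {l : List S} (h : ∀ x ∈ l, Ideal.span {x * p} = Ideal.span {p}) :
    Ideal.span {l.prod * p} = Ideal.span {p} := by
  induction l with
  | nil => simp
  | cons x t ih =>
    rw [List.prod_cons, mul_assoc, ← Ideal.span_singleton_mul_span_singleton,
      ih fun y hy => h y (List.mem_cons_of_mem x hy), Ideal.span_singleton_mul_span_singleton,
      h x List.mem_cons_self]

theorem IsUFact.span_singleton_eq {a u : R} {ines ess : List R} (h : IsUFact a u ines ess) :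
    Ideal.span {a} = Ideal.span {ess.prod} := by
  obtain ⟨hu, -, -, rfl, hines, -⟩ := h
  rw [mul_assoc, Ideal.span_singleton_mul_left_unit hu]
  exact Ideal.span_singleton_prod_mul_eq_of_forall hines

theorem stmt9_general {R : Type*} [CommRing R] (τ : R → R → Prop) (hsa : StronglyAssociateRing R)
    (a u : R) (ines ess : List R)
    (h : IsTauUFact τ a u ines ess) :
    ∃ μ : R, IsUnit μ ∧ IsTauFact τ a μ ess := by
  obtain ⟨hU, hpair⟩ := h
  obtain ⟨μ, hμ, ha⟩ := hsa _ _ hU.span_singleton_eq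
  exact ⟨μ, hμ, hμ, hU.2.2.1, ha, (List.pairwise_append.mp hpair).2.1⟩

/-- In a strongly associate ring, a τ-U-factorization with τ-irreducible
essential divisors yields a τ-factorization `a = μ * b₁ ⋯ bₘ` into those
τ-irreducible essential divisors, for some unit `μ`. -/
theorem stmt9 {R : Type*} [CommRing R] (τ : R → R → Prop) (hsym : Symmetric τ)
    (hsub : ∀ x y : R, τ x y → NNU x ∧ NNU y) (hsa : StronglyAssociateRing R)
    (a u : R) (ines ess : List R) (ha : ¬ IsUnit a)
    (h : IsTauUFact τ a u ines ess) (hirr : ∀ b ∈ ess, TauIrred τ b) :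
    ∃ μ : R, IsUnit μ ∧ IsTauFact τ a μ ess :=
  stmt9_general τ hsa a u ines ess h
end

section
/- Let R be a commutative ring with 1 and τ a symmetric relation on R^#. If R satisfies τ-ACCP, then R satisfies τ-U-ACCP: there is no infinite properly ascending chain of principal ideals (a₁) ⊊ (a₂) ⊊ ⋯ such that each a_{i+1} occurs as an essential divisor in some τ-U-factorization of aᵢ. -/
variable {R : Type*} [CommRing R]

/-- If `R` satisfies τ-ACCP, then `R` satisfies τ-U-ACCP. -/
theorem stmt10 {R : Type*} [CommRing R] (τ : R → R → Prop) (hsym : Symmetric τ)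
    (hsub : ∀ x y : R, τ x y → NNU x ∧ NNU y) (h : TauACCP τ) :
    TauUACCP τ := by
  intro ⟨c, hlt, hdiv⟩
  apply h
  refine ⟨c, hlt, fun i => ?_⟩
  obtain ⟨u, ines, ess, ⟨⟨hu, hines, hess, heq, -, -⟩, hpw⟩, hmem⟩ := hdiv i
  exact ⟨u, ines ++ ess,
    ⟨hu, fun x hx => (List.mem_append.1 hx).elim (hines x) (hess x),
      by rw [List.prod_append, ← mul_assoc]; exact heq, hpw⟩,
    List.mem_append.2 (Or.inr hmem)⟩
end

section
/- Let R be a commutative ring with 1 and τ a symmetric relation on R^#. If R is a τ-U-(associate)-FFR (every non-unit has only finitely many τ-U-factorizations up to rearrangement and associates of the essential divisors), then R is a τ-U-BFR (every non-unit has a bound on the number of essential divisors in any τ-U-factorization). -/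
variable {R : Type*} [CommRing R]

theorem AssocPerm.length_eq {l l' : List R} (h : AssocPerm l l') : l.length = l'.length := by
  obtain ⟨l'', hperm, hassoc⟩ := h
  rw [hassoc.length_eq, hperm.length_eq]

theorem stmt11_general {R : Type*} [CommRing R] (τ : R → R → Prop)
    (h : ∀ a : R, ¬ IsUnit a → ∃ L : List (List R), ∀ u ines ess,
      IsTauUFact τ a u ines ess → ∃ l ∈ L, AssocPerm ess l) :
    TauUBFR τ := by
  intro a ha
  obtain ⟨L, hL⟩ := h a ha
  refine ⟨(L.map List.length).sum, fun u ines ess hf => ?_⟩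
  obtain ⟨l, hl, hess⟩ := hL u ines ess hf
  rw [hess.length_eq]
  exact List.le_sum_of_mem (List.mem_map_of_mem hl)

/-- If every nonunit has only finitely many τ-U-factorizations up to
rearrangement and associates of the essential divisors, then `R` is a
τ-U-BFR. -/
theorem stmt11 {R : Type*} [CommRing R] (τ : R → R → Prop) (hsym : Symmetric τ)
    (hsub : ∀ x y : R, τ x y → NNU x ∧ NNU y)
    (h : ∀ a : R, ¬ IsUnit a → ∃ L : List (List R), ∀ u ines ess,
      IsTauUFact τ a u ines ess → ∃ l ∈ L, AssocPerm ess l) :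
    TauUBFR τ :=
  stmt11_general τ h
end

section
/- Let R be a commutative ring with 1 and τ a symmetric relation on R^# such that R is τ-U-refinable. If R is a τ-U-BFR, then R satisfies τ-U-ACCP: there is no infinite properly ascending chain of principal ideals (a₁) ⊊ (a₂) ⊊ ⋯ with each a_{i+1} an essential divisor in some τ-U-factorization of aᵢ. -/
variable {R : Type*} [CommRing R]

/-!
Refine along the chain `c`: the τ-U-factorization exhibiting `c (k+1)` as an essential divisor
of `c k` has at least two essential divisors, because an element with a U-factorization whose
only essential divisor is `b` generates `(b)` (each inessential divisor `x` has `(x b) = (b)`),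
while `(c k) ≠ (c (k+1))`. Substituting it for `c (k+1)` in a τ-U-factorization of `c 0`
therefore strictly increases the number of essential divisors, so `c 0` has
τ-U-factorizations with arbitrarily many of them.
-/

lemma List.prod_mul_dvd_of_forall_mul_dvd {M : Type*} [CommMonoid M] {b : M} (l : List M)
    (hl : ∀ x ∈ l, x * b ∣ b) :
    l.prod * b ∣ b := by
  induction l with
  | nil => simp
  | cons x t ih =>
    calc (x :: t).prod * b = x * (t.prod * b) := by rw [List.prod_cons, mul_assoc]
      _ ∣ x * b := mul_dvd_mul_left x (ih fun y hy => hl y (List.mem_cons_of_mem _ hy))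
      _ ∣ b := hl x List.mem_cons_self

namespace IsUFact

variable {a u : R} {ines ess : List R}

lemma not_isUnit_of_mem_ess (h : IsUFact a u ines ess) {b : R} (hb : b ∈ ess) :
    ¬ IsUnit a := by
  obtain ⟨-, -, hess, rfl, -, -⟩ := h
  exact fun ha => (hess b hb).2 <|
    isUnit_of_dvd_unit (List.dvd_prod hb) (isUnit_of_mul_isUnit_right ha)

lemma span_eq_of_ess_eq_singleton {b : R} (h : IsUFact a u ines [b]) :
    Ideal.span ({a} : Set R) = Ideal.span ({b} : Set R) := by
  obtain ⟨hu, -, -, rfl, hines, -⟩ := h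
  simp only [List.prod_singleton] at hines ⊢
  have hdvd : ines.prod * b ∣ b := ines.prod_mul_dvd_of_forall_mul_dvd fun x hx =>
    Ideal.span_singleton_le_span_singleton.mp (hines x hx).ge
  refine le_antisymm (Ideal.span_singleton_le_span_singleton.mpr ⟨u * ines.prod, by ring⟩)
    (Ideal.span_singleton_le_span_singleton.mpr (dvd_trans ?_ hdvd))
  rw [mul_assoc]
  exact hu.mul_left_dvd.mpr dvd_rfl

lemma one_lt_length_ess {b : R} (h : IsUFact a u ines ess) (hb : b ∈ ess)
    (hab : Ideal.span ({a} : Set R) ≠ Ideal.span ({b} : Set R)) : 1 < ess.length := by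
  rcases ess with _ | ⟨x, _ | ⟨y, t⟩⟩
  · simp at hb
  · rw [List.mem_singleton.mp hb] at hab
    exact absurd h.span_eq_of_ess_eq_singleton hab
  · simp

end IsUFact

lemma TauURefinable.exists_longer_of_isEssTauUDivisor {τ : R → R → Prop}
    (href : TauURefinable τ) {a u b c : R} {ines ess : List R}
    (hf : IsTauUFact τ a u ines ess) (hb : b ∈ ess) (hcb : IsEssTauUDivisor τ c b)
    (hbc : Ideal.span ({b} : Set R) ≠ Ideal.span ({c} : Set R)) :
    ∃ u' ines' ess', IsTauUFact τ a u' ines' ess' ∧ c ∈ ess' ∧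
      ess.length < ess'.length := by
  obtain ⟨v, jnes, fss, hg, hc⟩ := hcb
  obtain ⟨e₁, e₂, rfl⟩ := List.append_of_mem hb
  have hlen := hg.1.one_lt_length_ess hc hbc
  refine ⟨u * v, ines ++ jnes, e₁ ++ fss ++ e₂, href a u b v ines jnes fss e₁ e₂ hf hg,
    by simp [hc], ?_⟩
  simp only [List.length_append, List.length_cons]
  omega

lemma TauURefinable.exists_tauUFact_of_chain {τ : R → R → Prop} (href : TauURefinable τ)
    {c : ℕ → R}
    (hne : ∀ i, Ideal.span ({c i} : Set R) ≠ Ideal.span ({c (i + 1)} : Set R))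
    (hdiv : ∀ i, IsEssTauUDivisor τ (c (i + 1)) (c i)) (k : ℕ) :
    ∃ u ines ess, IsTauUFact τ (c 0) u ines ess ∧ c (k + 1) ∈ ess ∧ k < ess.length := by
  induction k with
  | zero =>
    obtain ⟨u, ines, ess, hf, hm⟩ := hdiv 0
    exact ⟨u, ines, ess, hf, hm, List.length_pos_of_mem hm⟩
  | succ k ih =>
    obtain ⟨u, ines, ess, hf, hm, hk⟩ := ih
    obtain ⟨u', ines', ess', hf', hm', hlen⟩ :=
      href.exists_longer_of_isEssTauUDivisor hf hm (hdiv (k + 1)) (hne (k + 1))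
    exact ⟨u', ines', ess', hf', hm', by omega⟩

theorem stmt12_general {R : Type*} [CommRing R] (τ : R → R → Prop) (href : TauURefinable τ)
    (h : TauUBFR τ) :
    TauUACCP τ := by
  rintro ⟨c, hlt, hdiv⟩
  have hnu : ¬ IsUnit (c 0) := by
    obtain ⟨u, ines, ess, hf, hm⟩ := hdiv 0
    exact hf.1.not_isUnit_of_mem_ess hm
  obtain ⟨N, hN⟩ := h (c 0) hnu
  obtain ⟨u, ines, ess, hf, -, hlen⟩ :=
    href.exists_tauUFact_of_chain (fun i => (hlt i).ne) hdiv N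
  exact (hN u ines ess hf).not_gt hlen

/-- If `R` is τ-U-refinable and a τ-U-BFR, then `R` satisfies τ-U-ACCP. -/
theorem stmt12 {R : Type*} [CommRing R] (τ : R → R → Prop) (hsym : Symmetric τ)
    (hsub : ∀ x y : R, τ x y → NNU x ∧ NNU y) (href : TauURefinable τ)
    (h : TauUBFR τ) :
    TauUACCP τ :=
  stmt12_general τ href h
end

section
/- Let R be a commutative ring with 1, τ a symmetric relation on R^#, and suppose R is τ-U-refinable. If R is a τ-U-irreducible-HFR, then R is a τ-U-BFR: in fact, if every τ-U-atomic factorization of a non-unit a has exactly N essential divisors, then no τ-U-factorization of a has more than N essential divisors. -/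
variable {R : Type*} [CommRing R]

lemma unit_of_empty_ess {R : Type*} [CommRing R] {τ : R → R → Prop} {b u : R} {ines : List R}
    (h : IsTauUFact τ b u ines []) : IsUnit b := by
  obtain ⟨⟨hu, hines, _, heq, hspan, _⟩, _⟩ := h
  have hx : ∀ x ∈ ines, IsUnit x := by
    intro x hx
    have h2 := hspan x hx
    rw [List.prod_nil, mul_one, Ideal.span_singleton_one] at h2
    exact Ideal.span_singleton_eq_top.mp h2
  have hprod : IsUnit ines.prod := List.prod_isUnit hx
  rw [heq, List.prod_nil, mul_one]
  exact hu.mul hprod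

lemma refine_to_irred {R : Type*} [CommRing R] {τ : R → R → Prop}
    (hatomic : ∀ a : R, ¬ IsUnit a → ∃ u ines ess, IsTauUFact τ a u ines ess ∧
      ∀ b ∈ ess, TauIrred τ b)
    (href : TauURefinable τ) :
    ∀ (e₂ : List R) (a u : R) (ines e₁ : List R),
      IsTauUFact τ a u ines (e₁ ++ e₂) → (∀ b ∈ e₁, TauIrred τ b) →
      ∃ u' ines' ess', IsTauUFact τ a u' ines' ess' ∧ (∀ b ∈ ess', TauIrred τ b) ∧
        e₁.length + e₂.length ≤ ess'.length := by
  intro e₂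
  induction e₂ with
  | nil =>
    intro a u ines e₁ h h1
    exact ⟨u, ines, e₁, by simpa using h, h1, by simp⟩
  | cons b e₂ ih =>
    intro a u ines e₁ h h1
    have hbnnu : NNU b := h.1.2.2.1 b (by simp)
    obtain ⟨ub, inesb, essb, hb, hbirr⟩ := hatomic b hbnnu.2
    have hne : essb ≠ [] := by
      rintro rfl; exact hbnnu.2 (unit_of_empty_ess hb)
    have h2 := href a u b ub ines inesb essb e₁ e₂ h hb
    obtain ⟨u', ines', ess', h3, h4, h5⟩ := ih a (u * ub) (ines ++ inesb) (e₁ ++ essb)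
      (by simpa [List.append_assoc] using h2)
      (by intro x hx; rcases List.mem_append.mp hx with hx | hx
          exacts [h1 x hx, hbirr x hx])
    refine ⟨u', ines', ess', h3, h4, ?_⟩
    have hl : 1 ≤ essb.length := List.length_pos_iff.mpr hne
    simp only [List.length_append, List.length_cons] at h5 ⊢
    omega

/-- If `R` is τ-U-refinable and a τ-U-irreducible-HFR, then `R` is a τ-U-BFR;
in fact if every τ-U-atomic factorization of `a` has exactly `N` essential
divisors, then no τ-U-factorization of `a` has more than `N`. -/
theorem stmt14 {R : Type*} [CommRing R] (τ : R → R → Prop) (hsym : Symmetric τ)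
    (hsub : ∀ x y : R, τ x y → NNU x ∧ NNU y) (href : TauURefinable τ)
    (hatomic : ∀ a : R, ¬ IsUnit a → ∃ u ines ess, IsTauUFact τ a u ines ess ∧
      ∀ b ∈ ess, TauIrred τ b)
    (hhfr : ∀ (a u u' : R) (ines ess ines' ess' : List R), ¬ IsUnit a →
      IsTauUFact τ a u ines ess → (∀ b ∈ ess, TauIrred τ b) →
      IsTauUFact τ a u' ines' ess' → (∀ b ∈ ess', TauIrred τ b) →
      ess.length = ess'.length) :
    TauUBFR τ ∧
      ∀ (a : R) (N : ℕ), ¬ IsUnit a →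
        (∀ u ines ess, IsTauUFact τ a u ines ess → (∀ b ∈ ess, TauIrred τ b) →
          ess.length = N) →
        ∀ u ines ess, IsTauUFact τ a u ines ess → ess.length ≤ N := by
  have part2 : ∀ (a : R) (N : ℕ), ¬ IsUnit a →
      (∀ u ines ess, IsTauUFact τ a u ines ess → (∀ b ∈ ess, TauIrred τ b) →
        ess.length = N) →
      ∀ u ines ess, IsTauUFact τ a u ines ess → ess.length ≤ N := by
    intro a N ha hN u ines ess h
    obtain ⟨u', ines', ess', h3, h4, h5⟩ :=
      refine_to_irred hatomic href ess a u ines [] (by simpa using h) (by simp)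
    simp only [List.length_nil, Nat.zero_add] at h5
    calc ess.length ≤ ess'.length := h5
      _ = N := hN u' ines' ess' h3 h4
  refine ⟨?_, part2⟩
  intro a ha
  obtain ⟨u₀, ines₀, ess₀, h₀, hirr₀⟩ := hatomic a ha
  refine ⟨ess₀.length, part2 a ess₀.length ha ?_⟩
  intro u ines ess hf hi
  exact hhfr a u u₀ ines ess ines₀ ess₀ ha hf hi h₀ hirr₀
end

section
/- Let R₁, …, R_N be commutative rings with 1 and R = R₁ × ⋯ × R_N. Then (a₁,…,a_N) ∼ (b₁,…,b_N) in R (i.e., they generate the same principal ideal) if and only if aᵢ ∼ bᵢ in Rᵢ for every i; and (a₁,…,a_N) ≈ (b₁,…,b_N) (i.e., they differ by a unit of R) if and only if aᵢ ≈ bᵢ in Rᵢ for every i. Moreover (aᵢ) ≅ (bᵢ) implies aᵢ ≅ bᵢ for all i, and if all aᵢ, bᵢ are nonzero then aᵢ ≅ bᵢ for all i implies (aᵢ) ≅ (bᵢ). -/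
variable {R : Type*} [CommRing R]

lemma piIsUnitIff {N : ℕ} {S : Fin N → Type*} [∀ i, CommRing (S i)]
    (f : ∀ i, S i) : IsUnit f ↔ ∀ i, IsUnit (f i) := by
  simp only [isUnit_iff_exists_inv]
  constructor
  · rintro ⟨g, hg⟩ i
    exact ⟨g i, congrFun hg i⟩
  · intro h
    choose g hg using h
    exact ⟨g, funext hg⟩

lemma piDvdIff {N : ℕ} {S : Fin N → Type*} [∀ i, CommRing (S i)]
    (a b : ∀ i, S i) : a ∣ b ↔ ∀ i, a i ∣ b i := by
  constructor
  · rintro ⟨c, rfl⟩ i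
    exact ⟨c i, rfl⟩
  · intro h
    choose c hc using h
    exact ⟨c, funext hc⟩

lemma pi_span_eq_iff {N : ℕ} {S : Fin N → Type*} [∀ i, CommRing (S i)]
    (a b : ∀ i, S i) :
    Ideal.span ({a} : Set (∀ i, S i)) = Ideal.span ({b} : Set (∀ i, S i)) ↔
      ∀ i, Ideal.span ({a i} : Set (S i)) = Ideal.span ({b i} : Set (S i)) := by
  simp only [le_antisymm_iff, Ideal.span_singleton_le_span_singleton, piDvdIff,
    ← forall_and]

/-- Associate, strong associate, and (partially) very strong associate
relations in a finite product of commutative rings are determined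
coordinatewise. -/
theorem stmt15 {N : ℕ} {S : Fin N → Type*} [∀ i, CommRing (S i)]
    (a b : ∀ i, S i) :
    (Ideal.span ({a} : Set (∀ i, S i)) = Ideal.span ({b} : Set (∀ i, S i)) ↔
        ∀ i, Ideal.span ({a i} : Set (S i)) = Ideal.span ({b i} : Set (S i))) ∧
      ((∃ u : ∀ i, S i, IsUnit u ∧ a = u * b) ↔
        ∀ i, ∃ u : S i, IsUnit u ∧ a i = u * b i) ∧
      (VSAssoc a b → ∀ i, VSAssoc (a i) (b i)) ∧
      ((∀ i, a i ≠ 0) → (∀ i, b i ≠ 0) → (∀ i, VSAssoc (a i) (b i)) →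
        VSAssoc a b) := by
  have hspan := pi_span_eq_iff a b
  refine ⟨hspan, ?_, ?_, ?_⟩
  · constructor
    · rintro ⟨u, hu, rfl⟩ i
      exact ⟨u i, (piIsUnitIff _).mp hu i, rfl⟩
    · intro h
      choose u hu heq using h
      exact ⟨u, (piIsUnitIff _).mpr hu, funext heq⟩
  · rintro ⟨h1, h2⟩ i
    refine ⟨hspan.mp h1 i, ?_⟩
    rcases h2 with ⟨ha, hb⟩ | h2
    · left; exact ⟨congrFun ha i, congrFun hb i⟩
    · right
      intro r hr
      have hdvd : ∀ j, b j ∣ a j := fun j =>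
        (Ideal.span_singleton_le_span_singleton.mp (hspan.mp h1 j).le)
      choose c hc using hdvd
      set r' : ∀ j, S j := fun j => if h : j = i then h ▸ r else c j with hr'
      have : a = r' * b := by
        funext j
        by_cases h : j = i
        · subst h; simp [hr', hr, mul_comm]
        · simp [hr', h, hc j, mul_comm]
      have := (piIsUnitIff _).mp (h2 r' this) i
      simpa [hr'] using this
  · intro ha hb h
    refine ⟨hspan.mpr fun i => (h i).1, Or.inr ?_⟩
    intro r hr
    refine (piIsUnitIff _).mpr fun i => ?_
    rcases (h i).2 with ⟨h0, _⟩ | h2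
    · exact absurd h0 (ha i)
    · exact h2 (r i) (congrFun hr i)
end

section
/- Let R = R₁ × ⋯ × R_N be a product of commutative rings with symmetric relations τᵢ on Rᵢ^#, and let τ_× be the relation on R^# defined by (aᵢ) τ_× (bᵢ) iff aᵢ τᵢ bᵢ whenever both aᵢ and bᵢ are non-units of Rᵢ. If a non-unit (aᵢ) ∈ R is τ_×-irreducible, then exactly one coordinate a_{i₀} is a non-unit (and all other coordinates are units). -/
variable {R : Type*} [CommRing R]

/-!
If two distinct coordinates `i ≠ j` of `a` were non-units, write `a = e * f`, where `e` agrees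
with `a` at `i` and is `1` elsewhere, and `f` is `a` with its `i`-th coordinate replaced by `1`.
In every coordinate one of `e`, `f` is a unit, so `e τ_× f` holds vacuously, and irreducibility
gives `(a) = (e)` or `(a) = (f)`. Both are impossible: `e` is a unit at `j` and `f` at `i`,
and a unit coordinate of a multiple of `a` forces the same coordinate of `a` to be a unit.
-/

theorem TauIrred.span_eq_or_span_eq_of_mul {τ : R → R → Prop} {a b c : R} (h : TauIrred τ a)
    (hb : NNU b) (hc : NNU c) (hbc : τ b c) (habc : a = b * c) :
    Ideal.span {a} = Ideal.span {b} ∨ Ideal.span {a} = Ideal.span {c} := by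
  have hfact : IsTauFact τ a 1 [b, c] :=
    ⟨isUnit_one, by simp [hb, hc], by simp [habc], by simpa using hbc⟩
  obtain ⟨d, hd, hspan⟩ := h.2 1 [b, c] hfact
  rcases List.mem_pair.mp hd with rfl | rfl
  exacts [.inl hspan, .inr hspan]

section Pi

variable {ι : Type*} {S : ι → Type*} [∀ i, CommRing (S i)]

theorem tauX_of_isUnit_or_isUnit {τ : ∀ i, S i → S i → Prop} {b c : ∀ i, S i}
    (h : ∀ k, IsUnit (b k) ∨ IsUnit (c k)) : TauX τ b c :=
  fun k hb hc => absurd ((h k).resolve_left hb) hc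

theorem nnu_pi_of_apply_eq_one {f : ∀ i, S i} {i j : ι} [Nontrivial (S j)]
    (hi : ¬IsUnit (f i)) (hj : f j = 1) : NNU f :=
  ⟨fun h0 => one_ne_zero (hj.symm.trans (congrFun h0 j)), fun hu => hi (hu.apply i)⟩

theorem isUnit_apply_of_span_eq {a d : ∀ i, S i} (hspan : Ideal.span {a} = Ideal.span {d})
    {k : ι} (hd : IsUnit (d k)) : IsUnit (a k) :=
  have had : a ∣ d := Ideal.span_singleton_le_span_singleton.mp hspan.ge
  isUnit_of_dvd_unit (map_dvd (Pi.evalMonoidHom S k) had) hd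

theorem mulSingle_mul_update_one [DecidableEq ι] (a : ∀ i, S i) (i : ι) :
    Pi.mulSingle i (a i) * Function.update a i 1 = a := by
  funext k
  by_cases hk : k = i
  · subst hk; simp
  · simp [hk]

theorem TauIrred.eq_of_not_isUnit [DecidableEq ι] {τ : ∀ i, S i → S i → Prop}
    {a : ∀ i, S i} (h : TauIrred (TauX τ) a) {i j : ι} (hi : ¬IsUnit (a i))
    (hj : ¬IsUnit (a j)) : i = j := by
  by_contra hij
  have : Nontrivial (S i) :=
    not_subsingleton_iff_nontrivial.mp fun _ => hi (isUnit_of_subsingleton _)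
  have : Nontrivial (S j) :=
    not_subsingleton_iff_nontrivial.mp fun _ => hj (isUnit_of_subsingleton _)
  set e : ∀ k, S k := Pi.mulSingle i (a i)
  set f : ∀ k, S k := Function.update a i 1
  have he_j : e j = 1 := Pi.mulSingle_eq_of_ne (Ne.symm hij) _
  have hf_i : f i = 1 := Function.update_self i 1 a
  have he : NNU e := nnu_pi_of_apply_eq_one (i := i) (by simpa [e] using hi) he_j
  have hf : NNU f := nnu_pi_of_apply_eq_one (i := j) (by simpa [f, Ne.symm hij] using hj) hf_i
  have hef : TauX τ e f := tauX_of_isUnit_or_isUnit fun k => by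
    by_cases hk : k = i
    · subst hk; exact .inr (hf_i ▸ isUnit_one)
    · exact .inl (by simp [e, hk])
  rcases h.span_eq_or_span_eq_of_mul he hf hef (mulSingle_mul_update_one a i).symm
    with hs | hs
  · exact hj (isUnit_apply_of_span_eq hs (he_j ▸ isUnit_one))
  · exact hi (isUnit_apply_of_span_eq hs (hf_i ▸ isUnit_one))

end Pi

theorem stmt16_general {N : ℕ} {S : Fin N → Type*} [∀ i, CommRing (S i)]
    (τ : ∀ i, S i → S i → Prop)
    (a : ∀ i, S i) (h : TauIrred (TauX τ) a) :
    ∃! i : Fin N, ¬ IsUnit (a i) := by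
  obtain ⟨i, hi⟩ : ∃ i, ¬IsUnit (a i) :=
    not_forall.mp fun hall => h.1 (Pi.isUnit_iff.mpr hall)
  exact ⟨i, hi, fun j hj => h.eq_of_not_isUnit hj hi⟩

/-- A τ_×-irreducible element of a finite product of rings has exactly one
non-unit coordinate. -/
theorem stmt16 {N : ℕ} {S : Fin N → Type*} [∀ i, CommRing (S i)]
    (τ : ∀ i, S i → S i → Prop) (hsym : ∀ i, Symmetric (τ i))
    (hsub : ∀ i, ∀ x y : S i, τ i x y → NNU x ∧ NNU y)
    (a : ∀ i, S i) (h : TauIrred (TauX τ) a) :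
    ∃! i : Fin N, ¬ IsUnit (a i) :=
  stmt16_general τ a h
end

section
/- Let R = R₁ × ⋯ × R_N with symmetric relations τᵢ on Rᵢ^# and τ_× on R^# defined coordinatewise on non-unit coordinates. A non-unit (a₁,…,a_N) ∈ R is τ_×-atomic (τ_×-irreducible) if and only if there is an index i₀ such that a_{i₀} is τ_{i₀}-atomic in R_{i₀} and aᵢ ∈ U(Rᵢ) for all i ≠ i₀. -/
variable {R : Type*} [CommRing R]

/-!
A factor of a τ_×-factorization divides `a`, so its coordinates outside `i₀` are units when
those of `a` are; evaluating at `i₀` thus turns τ_×-factorizations of `a` into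
τ_{i₀}-factorizations of `a i₀` (when there are at least two factors, their `i₀`-coordinates
are nonzero because τ_{i₀} only relates elements of `R^#`), and `Pi.mulSingle i₀` turns them
back. If instead two coordinates `a i₀`, `a j` were nonunits, then
`a = update a i₀ 1 * mulSingle i₀ (a i₀)` would be a τ_×-factorization, vacuously, since at
every index one of the factors is `1`; neither factor generates `(a)`.
-/

open Ideal

lemma List.Pairwise.forall_of_two_le_length {α : Type*} {r : α → α → Prop} {p : α → Prop}
    {l : List α} (hl : l.Pairwise r) (hr : ∀ x ∈ l, ∀ y ∈ l, r x y → p x ∧ p y)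
    (h2 : 2 ≤ l.length) : ∀ x ∈ l, p x := by
  rcases l with _ | ⟨x, _ | ⟨y, t⟩⟩
  · simp at h2
  · simp at h2
  · intro z hz
    have hx := (List.pairwise_cons.1 hl).1
    rcases List.mem_cons.1 hz with rfl | hz
    · exact (hr z (by simp) y (by simp) (hx y (by simp))).1
    · exact (hr x (by simp) z (by simp [hz]) (hx z hz)).2

lemma nontrivial_of_not_isUnit {M : Type*} [Monoid M] {a : M} (ha : ¬IsUnit a) : Nontrivial M :=
  not_subsingleton_iff_nontrivial.1 fun _ => ha (isUnit_of_subsingleton a)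

lemma span_singleton_eq_of_isUnit {a b : R} (ha : IsUnit a) (hb : IsUnit b) :
    span ({a} : Set R) = span {b} := by
  rw [span_singleton_eq_top.2 ha, span_singleton_eq_top.2 hb]

lemma TauIrred.of_two_le_length {τ : R → R → Prop} {a : R} (ha : ¬IsUnit a)
    (h : ∀ u l, IsTauFact τ a u l → 2 ≤ l.length → ∃ b ∈ l, span ({a} : Set R) = span {b}) :
    TauIrred τ a := by
  refine ⟨ha, fun u l hf => ?_⟩
  obtain ⟨hu, -, hprod, -⟩ := id hf
  rcases l with _ | ⟨x, _ | ⟨y, t⟩⟩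
  · exact absurd (by simpa [hprod] using hu) ha
  · exact ⟨x, by simp, by rw [hprod, List.prod_singleton, span_singleton_mul_left_unit hu]⟩
  · exact h u _ hf (by simp)

section Pi

variable {ι : Type*} {S : ι → Type*} [∀ i, CommRing (S i)]

lemma Pi.span_singleton_eq_span_singleton_iff {a b : ∀ i, S i} :
    span ({a} : Set (∀ i, S i)) = span {b} ↔ ∀ i, span ({a i} : Set (S i)) = span {b i} := by
  simp only [le_antisymm_iff, span_singleton_le_span_singleton, pi_dvd_iff, forall_and]

lemma Pi.span_singleton_eq_of_apply {a b : ∀ i, S i} {i : ι}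
    (hi : span ({a i} : Set (S i)) = span {b i})
    (ha : ∀ j ≠ i, IsUnit (a j)) (hb : ∀ j ≠ i, IsUnit (b j)) :
    span ({a} : Set (∀ i, S i)) = span {b} := by
  refine Pi.span_singleton_eq_span_singleton_iff.2 fun j => ?_
  rcases eq_or_ne j i with rfl | hj
  · exact hi
  · exact span_singleton_eq_of_isUnit (ha j hj) (hb j hj)

lemma Pi.not_isUnit_apply {a : ∀ i, S i} {i : ι} (ha : ¬IsUnit a)
    (hu : ∀ j ≠ i, IsUnit (a j)) : ¬IsUnit (a i) := fun hi =>
  ha <| Pi.isUnit_iff.2 fun j => (eq_or_ne j i).elim (· ▸ hi) (hu j)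

variable (τ : ∀ i, S i → S i → Prop)

lemma IsTauFact.apply {a u : ∀ i, S i} {l : List (∀ i, S i)}
    (h : IsTauFact (TauX τ) a u l) (i : ι) (hl : ∀ x ∈ l, NNU (x i)) :
    IsTauFact (τ i) (a i) (u i) (l.map (· i)) := by
  obtain ⟨hu, -, hprod, hpw⟩ := h
  refine ⟨hu.apply i, by simpa using hl, by simp [hprod, Pi.list_prod_apply], ?_⟩
  exact List.pairwise_map.2 (hpw.imp_of_mem fun hx hy hxy => hxy i (hl _ hx).2 (hl _ hy).2)

lemma IsTauFact.update [DecidableEq ι] {i : ι} {b u : S i} {m : List (S i)}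
    (h : IsTauFact (τ i) b u m) {c : ∀ j, S j} (hc : ∀ j ≠ i, IsUnit (c j)) :
    IsTauFact (TauX τ) (Function.update c i b) (Function.update c i u)
      (m.map (Pi.mulSingle i)) := by
  obtain ⟨hu, hnnu, hprod, hpw⟩ := h
  refine ⟨Pi.isUnit_iff.2 fun j => ?_, ?_, ?_, ?_⟩
  · by_cases hj : j = i
    · subst hj; simpa using hu
    · simpa [hj] using hc j hj
  · simp only [List.mem_map, forall_exists_index, and_imp, forall_apply_eq_imp_iff₂]
    intro x hx
    exact ⟨fun h0 => (hnnu x hx).1 (by simpa using congrFun h0 i),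
      fun hunit => (hnnu x hx).2 (by simpa using hunit.apply i)⟩
  · funext j
    by_cases hj : j = i
    · subst hj; simp [hprod, Pi.list_prod_apply, Function.comp_def]
    · simp [hj, Pi.list_prod_apply, Function.comp_def]
  · refine List.pairwise_map.2 (hpw.imp fun hxy j hx _ => ?_)
    by_cases hj : j = i
    · subst hj; simpa using hxy
    · exact absurd (by simp [hj]) hx

variable {τ} {a : ∀ i, S i}

lemma TauIrred.of_apply (hsub : ∀ i, ∀ x y : S i, τ i x y → NNU x ∧ NNU y) {i : ι}
    (hi : TauIrred (τ i) (a i)) (hu : ∀ j ≠ i, IsUnit (a j)) : TauIrred (TauX τ) a := by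
  refine .of_two_le_length (fun ha => hi.1 (ha.apply i)) fun u l hf hl => ?_
  have hunit : ∀ x ∈ l, ∀ j ≠ i, IsUnit (x j) := fun x hx j hj =>
    isUnit_of_dvd_unit (pi_dvd_iff.1 (hf.2.2.1 ▸ (List.dvd_prod hx).mul_left u) j) (hu j hj)
  have hnu : ∀ x ∈ l, ¬IsUnit (x i) := fun x hx => Pi.not_isUnit_apply (hf.2.1 x hx).2 (hunit x hx)
  have hnnu : ∀ x ∈ l, NNU (x i) := hf.2.2.2.forall_of_two_le_length
    (fun x hx y hy hxy => hsub i _ _ (hxy i (hnu x hx) (hnu y hy))) hl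
  obtain ⟨_, hb, hspan⟩ := hi.2 _ _ (hf.apply τ i hnnu)
  obtain ⟨x, hx, rfl⟩ := List.mem_map.1 hb
  exact ⟨x, hx, Pi.span_singleton_eq_of_apply hspan hu (hunit x hx)⟩

variable [DecidableEq ι]

lemma TauIrred.isUnit_apply_of_not_isUnit_apply (h : TauIrred (TauX τ) a) {i j : ι}
    (hji : j ≠ i) (hi : ¬IsUnit (a i)) : IsUnit (a j) := by
  by_contra hj
  set x : ∀ k, S k := Function.update a i 1
  set y : ∀ k, S k := Pi.mulSingle i (a i)
  have hxi : x i = 1 := Function.update_self _ _ _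
  have hxj : x j = a j := Function.update_of_ne hji _ _
  have hyi : y i = a i := Pi.mulSingle_eq_same _ _
  have hyj : y j = 1 := Pi.mulSingle_eq_of_ne hji _
  have hnz {k : ι} {z : ∀ k, S k} (hz : z k = 1) (hk : ¬IsUnit (a k)) : z ≠ 0 := by
    have := nontrivial_of_not_isUnit hk
    exact fun h0 => one_ne_zero (hz ▸ congrFun h0 k)
  have hfact : IsTauFact (TauX τ) a 1 [x, y] := by
    refine ⟨isUnit_one, ?_, ?_, ?_⟩
    · simp only [List.mem_cons, List.not_mem_nil, or_false, forall_eq_or_imp, forall_eq]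
      exact ⟨⟨hnz hxi hi, fun hx => hj (hxj ▸ hx.apply j)⟩,
        ⟨hnz hyj hj, fun hy => hi (hyi ▸ hy.apply i)⟩⟩
    · funext k
      by_cases hk : k = i
      · subst hk; simp [x, y]
      · simp [x, y, hk]
    · refine List.pairwise_pair.2 fun k hxk hyk => ?_
      by_cases hk : k = i
      · subst hk; exact absurd (hxi ▸ isUnit_one) hxk
      · exact absurd (by simp [y, hk]) hyk
  obtain ⟨b, hb, hspan⟩ := h.2 1 [x, y] hfact
  rw [Pi.span_singleton_eq_span_singleton_iff] at hspan
  simp only [List.mem_cons, List.not_mem_nil, or_false] at hb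
  rcases hb with rfl | rfl
  · exact hi (span_singleton_eq_top.1 (by simpa [hxi] using hspan i))
  · exact hj (span_singleton_eq_top.1 (by simpa [hyj] using hspan j))

lemma TauIrred.apply (h : TauIrred (TauX τ) a) {i : ι} (hu : ∀ j ≠ i, IsUnit (a j)) :
    TauIrred (τ i) (a i) := by
  refine ⟨Pi.not_isUnit_apply h.1 hu, fun u m hf => ?_⟩
  have hlift := hf.update τ hu
  rw [Function.update_eq_self] at hlift
  obtain ⟨_, hb, hspan⟩ := h.2 _ _ hlift
  obtain ⟨c, hc, rfl⟩ := List.mem_map.1 hb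
  exact ⟨c, hc, by simpa using Pi.span_singleton_eq_span_singleton_iff.1 hspan i⟩

end Pi

theorem stmt17_general {N : ℕ} {S : Fin N → Type*} [∀ i, CommRing (S i)]
    (τ : ∀ i, S i → S i → Prop)
    (hsub : ∀ i, ∀ x y : S i, τ i x y → NNU x ∧ NNU y)
    (a : ∀ i, S i) :
    TauIrred (TauX τ) a ↔
      ∃ i₀ : Fin N, TauIrred (τ i₀) (a i₀) ∧ ∀ i, i ≠ i₀ → IsUnit (a i) := by
  constructor
  · intro h
    obtain ⟨i₀, hi₀⟩ : ∃ i₀, ¬IsUnit (a i₀) := by simpa [Pi.isUnit_iff] using h.1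
    have hu : ∀ j ≠ i₀, IsUnit (a j) := fun j hj => h.isUnit_apply_of_not_isUnit_apply hj hi₀
    exact ⟨i₀, h.apply hu, hu⟩
  · rintro ⟨i₀, hi₀, hu⟩
    exact .of_apply hsub hi₀ hu

/-- A nonunit of a finite product of rings is τ_×-atomic iff some coordinate is
τᵢ-atomic and all other coordinates are units. -/
theorem stmt17 {N : ℕ} {S : Fin N → Type*} [∀ i, CommRing (S i)]
    (τ : ∀ i, S i → S i → Prop) (hsym : ∀ i, Symmetric (τ i))
    (hsub : ∀ i, ∀ x y : S i, τ i x y → NNU x ∧ NNU y)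
    (a : ∀ i, S i) (ha : ¬ IsUnit a) :
    TauIrred (TauX τ) a ↔
      ∃ i₀ : Fin N, TauIrred (τ i₀) (a i₀) ∧ ∀ i, i ≠ i₀ → IsUnit (a i) :=
  stmt17_general τ hsub a
end
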